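/- Quadratic variational form for group ℓ_q quasi-norms: let β > 0 and q = 2β/(1+β). Then for every x ∈ ℝ^p, (1/q)·Σ_{g∈Γ}‖x_g‖^q = min over η ∈ (0,∞)^{|Γ|} of [ ½ Σ_{g∈Γ} ‖x_g‖²/η_g + (1/(2β)) Σ_{g∈Γ} η_g^β ], and this also equals the minimum over all u ∈ ℝ^p, v ∈ ℝ^{|Γ|} with x = u⊙v of [ ½‖u‖² + (1/(2β)) Σ_{g∈Γ} |v_g|^{2β} ]. -/

import Mathlib

/-!
For `b, η ≥ 0`, Young's inequality with the conjugate exponents `(1 + β) / β` and `1 + β`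
gives `(1 + β) / (2β) · (η b) ^ (β / (1 + β)) ≤ b / 2 + η ^ β / (2β)`, with equality when
`b = η ^ β`. Summed over groups with `b = ‖x_g‖² / η_g` it bounds the `η`-objective from below,
and with `η = v_g²`, `b = ‖u_g‖²` it bounds the factorization objective from below.
The factorization `v_g = ‖x_g‖ ^ (1 / (1 + β))`, `u = x / v` attains the bound; in the
`η`-problem the optimal `η_g = ‖x_g‖ ^ (2 / (1 + β))` may be `0`, so the bound is only an infimum.
-/

open Real Finset Filter Topology

section Scalar

variable {β : ℝ}

theorem young_rpow_le_half_add (hβ : 0 < β) {b η : ℝ} (hb : 0 ≤ b) (hη : 0 ≤ η) :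
    (1 + β) / (2 * β) * (η * b) ^ (β / (1 + β)) ≤ b / 2 + η ^ β / (2 * β) := by
  have hβ1 : 0 < 1 + β := by linarith
  have hconj : ((1 + β) / β).HolderConjugate (1 + β) := by
    rw [Real.holderConjugate_iff, inv_div]
    refine ⟨by rw [one_lt_div hβ]; linarith, by field_simp; ring⟩
  have hyoung := Real.young_inequality_of_nonneg (rpow_nonneg hb (β / (1 + β)))
    (rpow_nonneg hη (β / (1 + β))) hconj
  have hexp : β / (1 + β) * ((1 + β) / β) = 1 := by field_simp
  rw [← rpow_mul hb, ← rpow_mul hη, hexp, div_mul_cancel₀ _ hβ1.ne', rpow_one] at hyoung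
  rw [mul_rpow hη hb]
  calc (1 + β) / (2 * β) * (η ^ (β / (1 + β)) * b ^ (β / (1 + β)))
      ≤ (1 + β) / (2 * β) * (b / ((1 + β) / β) + η ^ β / (1 + β)) := by
        rw [mul_comm (η ^ _)]; gcongr
    _ = b / 2 + η ^ β / (2 * β) := by field_simp

theorem div_rpow_one_div_one_add (hβ : 0 < β) {a : ℝ} (ha : 0 ≤ a) :
    a / a ^ (1 / (1 + β)) = a ^ (β / (1 + β)) := by
  have hβ1 : 1 + β ≠ 0 := by linarith
  have hexp : 1 - 1 / (1 + β) = β / (1 + β) := by field_simp; ring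
  rw [← hexp, rpow_sub' ha (by rw [hexp]; positivity), rpow_one]

theorem rpow_one_div_one_add_rpow {a : ℝ} (ha : 0 ≤ a) :
    (a ^ (1 / (1 + β))) ^ β = a ^ (β / (1 + β)) := by
  rw [← rpow_mul ha, one_div_mul_eq_div]

theorem tendsto_div_add_rpow (hβ : 0 < β) {a : ℝ} (ha : 0 ≤ a) :
    Tendsto (fun s => a / (a + s) ^ (1 / (1 + β))) (𝓝 0) (𝓝 (a ^ (β / (1 + β)))) := by
  rcases ha.eq_or_lt with rfl | ha
  · have hβ1 : 0 < 1 + β := by linarith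
    simp [zero_rpow (div_pos hβ hβ1).ne']
  · have hcont : ContinuousAt (fun s : ℝ => a / (a + s) ^ (1 / (1 + β))) 0 := by
      fun_prop (disch := positivity)
    have h := hcont.tendsto
    rwa [add_zero, div_rpow_one_div_one_add hβ ha.le] at h

theorem tendsto_add_rpow_rpow (hβ : 0 < β) {a : ℝ} (ha : 0 ≤ a) :
    Tendsto (fun s => ((a + s) ^ (1 / (1 + β))) ^ β) (𝓝 0) (𝓝 (a ^ (β / (1 + β)))) := by
  have hβ1 : 0 < 1 + β := by linarith
  have hcont : Continuous fun s : ℝ => ((a + s) ^ (1 / (1 + β))) ^ β :=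
    ((continuous_const.add continuous_id).rpow_const fun _ => Or.inr (by positivity)).rpow_const
      fun _ => Or.inr hβ.le
  have h := hcont.tendsto 0
  rwa [add_zero, rpow_one_div_one_add_rpow ha] at h

end Scalar

variable {ι κ : Type*} [Fintype ι] {β : ℝ}

theorem half_mul_sum_add [Fintype κ] (f h : κ → ℝ) :
    1 / 2 * ∑ j, f j + 1 / (2 * β) * ∑ j, h j = ∑ j, (f j / 2 + h j / (2 * β)) := by
  rw [mul_sum, mul_sum, ← sum_add_distrib]
  exact sum_congr rfl fun j _ => by ring

theorem half_sum_add_sum_self [Fintype κ] (hβ : 0 < β) (f : κ → ℝ) :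
    1 / 2 * ∑ j, f j + 1 / (2 * β) * ∑ j, f j = ∑ j, (1 + β) / (2 * β) * f j := by
  rw [half_mul_sum_add]
  exact sum_congr rfl fun j _ => by field_simp; ring

theorem sInf_half_sum_div_add_sum_rpow [Fintype κ] (hβ : 0 < β) (n : κ → ℝ)
    (hn : ∀ j, 0 ≤ n j) :
    sInf {c : ℝ | ∃ η : κ → ℝ, (∀ j, 0 < η j) ∧
        c = 1 / 2 * (∑ j, n j / η j) + 1 / (2 * β) * ∑ j, η j ^ β}
      = ∑ j, (1 + β) / (2 * β) * n j ^ (β / (1 + β)) := by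
  refine IsGLB.csInf_eq (isGLB_of_mem_closure ?_ ?_) ⟨_, fun _ => 1, fun _ => one_pos, rfl⟩
  · rintro c ⟨η, hη, rfl⟩
    rw [half_mul_sum_add]
    refine sum_le_sum fun j _ => ?_
    have h := young_rpow_le_half_add hβ (div_nonneg (hn j) (hη j).le) (hη j).le
    rwa [mul_div_cancel₀ _ (hη j).ne'] at h
  · -- approach the minimizer by `η j = (n j + s) ^ (1 / (1 + β))`, `s → 0⁺`
    rw [← half_sum_add_sum_self hβ]
    refine mem_closure_of_tendsto (f := fun s => 1 / 2 * (∑ j, n j / (n j + s) ^ (1 / (1 + β)))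
        + 1 / (2 * β) * ∑ j, ((n j + s) ^ (1 / (1 + β))) ^ β) (b := 𝓝[>] 0) ?_ ?_
    · refine Tendsto.mono_left ?_ nhdsWithin_le_nhds
      exact ((tendsto_finsetSum _ fun j _ => tendsto_div_add_rpow hβ (hn j)).const_mul _).add
        ((tendsto_finsetSum _ fun j _ => tendsto_add_rpow_rpow hβ (hn j)).const_mul _)
    · filter_upwards [self_mem_nhdsWithin] with s hs
      exact ⟨_, fun j => rpow_pos_of_pos (add_pos_of_nonneg_of_pos (hn j) hs) _, rfl⟩

theorem abs_rpow_two_mul (v β : ℝ) : |v| ^ (2 * β) = (v ^ 2) ^ β := by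
  rw [rpow_mul (abs_nonneg v), rpow_two, sq_abs]

section Groups

variable [DecidableEq κ]

def groupSqNorm (g : ι → κ) (x : ι → ℝ) (j : κ) : ℝ :=
  ∑ i, if g i = j then x i ^ 2 else 0

theorem groupSqNorm_nonneg (g : ι → κ) (x : ι → ℝ) (j : κ) : 0 ≤ groupSqNorm g x j :=
  sum_nonneg fun i _ => by split_ifs <;> positivity

theorem sq_le_groupSqNorm (g : ι → κ) (x : ι → ℝ) (i : ι) : x i ^ 2 ≤ groupSqNorm g x (g i) := by
  have h := single_le_sum (f := fun i' => if g i' = g i then x i' ^ 2 else 0)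
    (fun i' _ => by split_ifs <;> positivity) (mem_univ i)
  simpa [groupSqNorm] using h

theorem sum_groupSqNorm [Fintype κ] (g : ι → κ) (x : ι → ℝ) :
    ∑ j, groupSqNorm g x j = ∑ i, x i ^ 2 := by
  unfold groupSqNorm
  rw [sum_comm]
  simp

theorem groupSqNorm_mul_comp (g : ι → κ) (v : κ → ℝ) (u : ι → ℝ) (j : κ) :
    groupSqNorm g (fun i => v (g i) * u i) j = v j ^ 2 * groupSqNorm g u j := by
  unfold groupSqNorm
  rw [mul_sum]
  refine sum_congr rfl fun i _ => ?_
  split_ifs with h <;> simp [h, mul_pow]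

theorem groupSqNorm_div_comp (g : ι → κ) (x : ι → ℝ) (w : κ → ℝ) (j : κ) :
    groupSqNorm g (fun i => x i / w (g i)) j = groupSqNorm g x j / w j ^ 2 := by
  unfold groupSqNorm
  rw [sum_div]
  refine sum_congr rfl fun i _ => ?_
  split_ifs with h <;> simp [h, div_pow]

theorem isLeast_half_sum_sq_add_sum_rpow [Fintype κ] (g : ι → κ) (hβ : 0 < β) (x : ι → ℝ) :
    IsLeast {c : ℝ | ∃ (u : ι → ℝ) (v : κ → ℝ), (∀ i, v (g i) * u i = x i) ∧
        c = 1 / 2 * (∑ i, u i ^ 2) + 1 / (2 * β) * ∑ j, |v j| ^ (2 * β)}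
      (∑ j, (1 + β) / (2 * β) * groupSqNorm g x j ^ (β / (1 + β))) := by
  have hn := groupSqNorm_nonneg g x
  constructor
  · set v : κ → ℝ := fun j => √(groupSqNorm g x j ^ (1 / (1 + β)))
    have hv_sq : ∀ j, v j ^ 2 = groupSqNorm g x j ^ (1 / (1 + β)) :=
      fun j => sq_sqrt (rpow_nonneg (hn j) _)
    have hfactor : ∀ i, v (g i) * (x i / v (g i)) = x i := by
      intro i
      rcases eq_or_ne (v (g i)) 0 with hv | hv
      · have hgroup : groupSqNorm g x (g i) = 0 := by
          have h := hv_sq (g i)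
          rw [hv, zero_pow two_ne_zero, eq_comm, rpow_eq_zero (hn _) (by positivity)] at h
          exact h
        have hx : x i = 0 := pow_eq_zero_iff two_ne_zero |>.mp
          (le_antisymm (hgroup ▸ sq_le_groupSqNorm g x i) (sq_nonneg _))
        simp [hv, hx]
      · exact mul_div_cancel₀ _ hv
    have hu : ∀ j, groupSqNorm g (fun i => x i / v (g i)) j = groupSqNorm g x j ^ (β / (1 + β)) :=
      fun j => by rw [groupSqNorm_div_comp, hv_sq, div_rpow_one_div_one_add hβ (hn j)]
    have hvβ : ∀ j, |v j| ^ (2 * β) = groupSqNorm g x j ^ (β / (1 + β)) :=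
      fun j => by rw [abs_rpow_two_mul, hv_sq, rpow_one_div_one_add_rpow (hn j)]
    refine ⟨fun i => x i / v (g i), v, hfactor, ?_⟩
    rw [← sum_groupSqNorm g, ← half_sum_add_sum_self hβ]
    simp only [hu, hvβ]
  · rintro c ⟨u, v, hx, rfl⟩
    obtain rfl : x = fun i => v (g i) * u i := funext fun i => (hx i).symm
    rw [← sum_groupSqNorm g u, half_mul_sum_add]
    refine sum_le_sum fun j _ => ?_
    rw [groupSqNorm_mul_comp, abs_rpow_two_mul]
    exact young_rpow_le_half_add hβ (groupSqNorm_nonneg g u j) (sq_nonneg _)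

end Groups

theorem one_div_mul_sum_sqrt_rpow [Fintype κ] {q : ℝ} (hq : q = 2 * β / (1 + β)) (n : κ → ℝ)
    (hn : ∀ j, 0 ≤ n j) :
    1 / q * ∑ j, √(n j) ^ q = ∑ j, (1 + β) / (2 * β) * n j ^ (β / (1 + β)) := by
  rw [hq, one_div_div, mul_sum]
  refine sum_congr rfl fun j _ => ?_
  rw [sqrt_eq_rpow, ← rpow_mul (hn j)]
  ring_nf

theorem statement15_general {p d : ℕ} (g : Fin p → Fin d)
    (β q : ℝ) (hβ : 0 < β) (hq : q = 2*β/(1+β)) (x : Fin p → ℝ) :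
    ((1/q) * ∑ j, (Real.sqrt (∑ i, if g i = j then (x i)^2 else 0)) ^ q
      = sInf { c : ℝ | ∃ η : Fin d → ℝ, (∀ j, 0 < η j) ∧
          c = (1/2) * (∑ j, (∑ i, if g i = j then (x i)^2 else 0) / η j)
              + (1/(2*β)) * ∑ j, (η j) ^ β })
    ∧
    IsLeast { c : ℝ | ∃ (u : Fin p → ℝ) (v : Fin d → ℝ),
        (∀ i, v (g i) * u i = x i) ∧
        c = (1/2) * (∑ i, (u i)^2) + (1/(2*β)) * ∑ j, |v j| ^ (2*β) }
      ((1/q) * ∑ j, (Real.sqrt (∑ i, if g i = j then (x i)^2 else 0)) ^ q) := by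
  have hn := groupSqNorm_nonneg g x
  have hvalue := one_div_mul_sum_sqrt_rpow hq _ hn
  unfold groupSqNorm at hvalue hn
  rw [hvalue]
  exact ⟨(sInf_half_sum_div_add_sum_rpow hβ _ hn).symm, isLeast_half_sum_sq_add_sum_rpow g hβ x⟩

/-- Quadratic variational form for group ℓ_q quasi-norms.
`β > 0`, `q = 2β/(1+β)`; the partition `Γ` is encoded by the surjective map
`g : Fin p → Fin d`, and `‖x_g‖ = √(Σ_{i : g i = j} x_i²)`.  Then
`(1/q)Σ_g ‖x_g‖^q` equals the infimum over `η ∈ (0,∞)^d` of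
`½Σ_g ‖x_g‖²/η_g + (1/2β)Σ_g η_g^β`, and is also the attained minimum over
factorizations `x = u⊙v` of `½‖u‖² + (1/2β)Σ_g |v_g|^{2β}`. -/
theorem statement15 {p d : ℕ} (g : Fin p → Fin d) (hg : Function.Surjective g)
    (β q : ℝ) (hβ : 0 < β) (hq : q = 2*β/(1+β)) (x : Fin p → ℝ) :
    ((1/q) * ∑ j, (Real.sqrt (∑ i, if g i = j then (x i)^2 else 0)) ^ q
      = sInf { c : ℝ | ∃ η : Fin d → ℝ, (∀ j, 0 < η j) ∧
          c = (1/2) * (∑ j, (∑ i, if g i = j then (x i)^2 else 0) / η j)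
              + (1/(2*β)) * ∑ j, (η j) ^ β })
    ∧
    IsLeast { c : ℝ | ∃ (u : Fin p → ℝ) (v : Fin d → ℝ),
        (∀ i, v (g i) * u i = x i) ∧
        c = (1/2) * (∑ i, (u i)^2) + (1/(2*β)) * ∑ j, |v j| ^ (2*β) }
      ((1/q) * ∑ j, (Real.sqrt (∑ i, if g i = j then (x i)^2 else 0)) ^ q) :=
  statement15_general g β q hβ hq x
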